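/- Let G be a connected graph of order n ≥ 2 with no true twin vertices and let H be a graph of order n' ≥ 2 with diameter D(H) ≤ 2. Then dim_s(G∘H) = n·dim_s(H) + n'·dim_s(G) − dim_s(G)·dim_s(H). -/

import Mathlib

open SimpleGraph

namespace Paper

variable {α β : Type*}

/-- The lexicographic product of two simple graphs. -/
def lexProd (G : SimpleGraph α) (H : SimpleGraph β) : SimpleGraph (α × β) where
  Adj p q := G.Adj p.1 q.1 ∨ (p.1 = q.1 ∧ H.Adj p.2 q.2)
  symm := by
    constructor
    rintro ⟨a, b⟩ ⟨c, d⟩ (h | ⟨h1, h2⟩)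
    · exact Or.inl h.symm
    · exact Or.inr ⟨h1.symm, h2.symm⟩
  loopless := by
    constructor
    rintro ⟨a, b⟩ (h | ⟨h1, h2⟩)
    · exact G.loopless.1 a h
    · exact H.loopless.1 b h2

/-- `u` is maximally distant from `v`. -/
def MaxDistant (G : SimpleGraph α) (u v : α) : Prop :=
  ∀ w, G.Adj u w → G.edist v w ≤ G.edist u v

/-- `u` and `v` are mutually maximally distant. -/
def MMD (G : SimpleGraph α) (u v : α) : Prop :=
  MaxDistant G u v ∧ MaxDistant G v u

/-- Two vertices are true twins if they have the same closed neighborhood. -/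
def TrueTwins (G : SimpleGraph α) (u v : α) : Prop :=
  ∀ w, (G.Adj u w ∨ u = w) ↔ (G.Adj v w ∨ v = w)

/-- The boundary of a graph: vertices belonging to some mutually maximally distant pair. -/
def boundary (G : SimpleGraph α) : Set α := {u | ∃ v, u ≠ v ∧ MMD G u v}

/-- The strong resolving graph of `G`, with vertex set the boundary of `G`. -/
def srGraph (G : SimpleGraph α) : SimpleGraph (boundary G) where
  Adj u v := u.1 ≠ v.1 ∧ MMD G u.1 v.1
  symm := ⟨fun u v h => ⟨h.1.symm, h.2.2, h.2.1⟩⟩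
  loopless := ⟨fun u h => h.1 rfl⟩

/-- The graph `G*`: same vertices, `u ~ v` iff `d_G(u,v) ≥ 2` or `u,v` are true twins. -/
def gstar (G : SimpleGraph α) : SimpleGraph α where
  Adj u v := u ≠ v ∧ (2 ≤ G.edist u v ∨ TrueTwins G u v)
  symm := by
    constructor
    rintro u v ⟨h1, (h2 | h2)⟩
    · exact ⟨h1.symm, Or.inl (by rwa [G.edist_comm] at h2)⟩
    · exact ⟨h1.symm, Or.inr fun w => (h2 w).symm⟩
  loopless := ⟨fun u h => h.1 rfl⟩

/-- `G*` with its isolated vertices removed. -/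
def gstarMinus (G : SimpleGraph α) : SimpleGraph {x | ∃ y, (gstar G).Adj x y} :=
  SimpleGraph.induce _ (gstar G)

/-- Disjoint union of two graphs. -/
def disjUnion (G : SimpleGraph α) (H : SimpleGraph β) : SimpleGraph (α ⊕ β) where
  Adj x y := match x, y with
    | Sum.inl a, Sum.inl b => G.Adj a b
    | Sum.inr a, Sum.inr b => H.Adj a b
    | _, _ => False
  symm := by
    constructor
    rintro (a | a) (b | b) h <;> simp_all <;> exact h.symm
  loopless := by
    constructor
    rintro (a | a) h <;> simp_all

/-- `k` disjoint copies of a graph. -/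
def copies (k : ℕ) (G : SimpleGraph α) : SimpleGraph (Fin k × α) where
  Adj p q := p.1 = q.1 ∧ G.Adj p.2 q.2
  symm := ⟨fun p q h => ⟨h.1.symm, h.2.symm⟩⟩
  loopless := ⟨fun p h => G.loopless.1 _ h.2⟩

/-- The join `K₁ + H` of a single vertex with `H`. -/
def joinK1 (H : SimpleGraph β) : SimpleGraph (Unit ⊕ β) where
  Adj x y := match x, y with
    | Sum.inl _, Sum.inl _ => False
    | Sum.inl _, Sum.inr _ => True
    | Sum.inr _, Sum.inl _ => True
    | Sum.inr a, Sum.inr b => H.Adj a b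
  symm := by
    constructor
    rintro (a | a) (b | b) h <;> simp_all <;> exact h.symm
  loopless := by
    constructor
    rintro (a | a) h <;> simp_all

/-- `w` strongly resolves the pair `u, v`. -/
def StronglyResolves (G : SimpleGraph α) (w u v : α) : Prop :=
  G.edist w u = G.edist w v + G.edist v u ∨ G.edist w v = G.edist w u + G.edist u v

/-- A strong metric generator. -/
def IsStrongGenerator (G : SimpleGraph α) (S : Finset α) : Prop :=
  ∀ u v : α, u ≠ v → ∃ w ∈ S, StronglyResolves G w u v

/-- The strong metric dimension. -/
noncomputable def sdim (G : SimpleGraph α) : ℕ :=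
  sInf {k | ∃ S : Finset α, IsStrongGenerator G S ∧ S.card = k}

/-- A vertex cover. -/
def IsVertexCover (G : SimpleGraph α) (S : Finset α) : Prop :=
  ∀ ⦃u v : α⦄, G.Adj u v → u ∈ S ∨ v ∈ S

/-- The vertex cover number `α(G)`. -/
noncomputable def vcNum (G : SimpleGraph α) : ℕ :=
  sInf {k | ∃ S : Finset α, IsVertexCover G S ∧ S.card = k}

/-- The independence number `β(G)`. -/
noncomputable def indepNum (G : SimpleGraph α) : ℕ :=
  sSup {k | ∃ S : Finset α, (∀ u ∈ S, ∀ v ∈ S, ¬ G.Adj u v) ∧ S.card = k}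


/-!
A strong resolving set `T` of `G ∘ H` meets every fibre `{g} × V(H)` in a strong resolving set
of `H`: a vertex outside the fibre is equidistant from all of it, and since `diam H ≤ 2`,
distances inside a fibre are those of `H`. Call `g` full if `T` contains its whole fibre. Full
vertices cover every mutually maximally distant pair `g, g'` of `G`. Otherwise some `(g, h)` and
`(g', h')` lie outside `T`; a resolver outside both fibres would strongly resolve `g, g'` in `G`,
which no third vertex does for an MMD pair, while a resolver `(g, y)` with `y ≠ h` forces
`g ~ g'`, impossible for an MMD pair of a twin-free graph, where some third vertex strongly
resolves every edge. A set covering all MMD pairs strongly resolves `G`, so at least `dim_s(G)`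
fibres are full and `|T| ≥ dim_s(G)·n' + (n - dim_s(G))·dim_s(H)`. Whole fibres over a strong
resolving set of `G`, plus a strong resolving set of `H` in every other fibre, attain this bound.
-/

open Finset

section StrongResolution

variable {G : SimpleGraph α} {u v w x : α}

theorem StronglyResolves.symm (h : StronglyResolves G w u v) : StronglyResolves G w v u :=
  Or.symm h

theorem stronglyResolves_left : StronglyResolves G u u v :=
  Or.inr (by rw [edist_self, zero_add])

theorem stronglyResolves_right : StronglyResolves G v u v :=
  Or.inl (by rw [edist_self, zero_add])

theorem stronglyResolves_iff_dist (hG : G.Preconnected) :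
    StronglyResolves G w u v ↔
      G.dist w u = G.dist w v + G.dist v u ∨ G.dist w v = G.dist w u + G.dist u v := by
  simp only [StronglyResolves, ← (hG _ _).coe_dist_eq_edist, ← Nat.cast_add, Nat.cast_inj]

theorem maxDistant_iff_dist (hG : G.Preconnected) :
    MaxDistant G u v ↔ ∀ w, G.Adj u w → G.dist v w ≤ G.dist u v := by
  simp only [MaxDistant, ← (hG _ _).coe_dist_eq_edist, Nat.cast_le]

theorem sdim_le_card {S : Finset α} (hS : IsStrongGenerator G S) : sdim G ≤ #S :=
  Nat.sInf_le ⟨S, hS, rfl⟩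

variable [Fintype α] (G)

theorem isStrongGenerator_univ : IsStrongGenerator G univ :=
  fun u _ _ => ⟨u, mem_univ u, stronglyResolves_left⟩

theorem exists_isStrongGenerator_card_eq_sdim : ∃ S, IsStrongGenerator G S ∧ #S = sdim G :=
  Nat.sInf_mem (s := {k | ∃ S : Finset α, IsStrongGenerator G S ∧ #S = k})
    ⟨_, univ, isStrongGenerator_univ G, rfl⟩

theorem sdim_le_fintype_card : sdim G ≤ Fintype.card α :=
  sdim_le_card (isStrongGenerator_univ G)

end StrongResolution

section MutuallyMaximallyDistant

variable {G : SimpleGraph α} {u v w x : α}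

theorem MaxDistant.dist_lt (hG : G.Preconnected) (hv : MaxDistant G v u) (hx : x ≠ v) :
    G.dist x u < G.dist x v + G.dist v u := by
  obtain ⟨p, hp⟩ := (hG v x).exists_walk_length_eq_dist
  cases p with
  | nil => exact absurd rfl hx
  | @cons _ w _ hvw q =>
    have hwx := dist_le q
    have hxu := (hG x w).dist_triangle_left u
    have hwu := (maxDistant_iff_dist hG).1 hv w hvw
    rw [Walk.length_cons] at hp
    have := G.dist_comm (u := x) (v := v)
    have := G.dist_comm (u := x) (v := w)
    have := G.dist_comm (u := u) (v := w)
    omega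

theorem MMD.not_stronglyResolves (hG : G.Preconnected) (h : MMD G u v) (hxu : x ≠ u)
    (hxv : x ≠ v) : ¬ StronglyResolves G x u v := by
  have := h.1.dist_lt hG hxu
  have := h.2.dist_lt hG hxv
  rw [stronglyResolves_iff_dist hG]
  omega

theorem exists_maxDistant [Fintype α] (hG : G.Preconnected) (u v : α) :
    ∃ u', MaxDistant G u' v ∧ G.dist v u' = G.dist v u + G.dist u u' := by
  classical
  obtain ⟨u', hu', hmax⟩ := (univ.filter fun x => G.dist v x = G.dist v u + G.dist u x)
    |>.exists_max_image (G.dist v) ⟨u, by simp⟩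
  rw [mem_filter] at hu'
  refine ⟨u', (maxDistant_iff_dist hG).2 fun w hw => ?_, hu'.2⟩
  by_contra! hlt
  have hvw := (hG v u').dist_triangle_left w
  have hvw' := (hG v u).dist_triangle_left w
  have huw := (hG u u').dist_triangle_left w
  rw [dist_eq_one_iff_adj.2 hw] at hvw huw
  rw [dist_comm] at hlt
  have := hmax w (mem_filter.2 ⟨mem_univ w, by omega⟩)
  omega

theorem isStrongGenerator_of_forall_mmd [Fintype α] (hG : G.Preconnected) {C : Finset α}
    (hC : ∀ u v, u ≠ v → MMD G u v → u ∈ C ∨ v ∈ C) : IsStrongGenerator G C := by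
  -- Push `u` away from `v` to `u'`, then `v` away from `u'` to `v'`: the pair `u', v'` is MMD
  -- and each of its members strongly resolves `u, v`.
  intro u v huv
  obtain ⟨u', hu'max, hu'⟩ := exists_maxDistant hG u v
  obtain ⟨v', hv'max, hv'⟩ := exists_maxDistant hG v u'
  have := G.dist_comm (u := u) (v := v)
  have := G.dist_comm (u := u') (v := u)
  have := G.dist_comm (u := u') (v := v)
  have := G.dist_comm (u := v') (v := u)
  have := G.dist_comm (u := v') (v := v)
  have hmax : MaxDistant G u' v' := (maxDistant_iff_dist hG).2 fun w hw => by
    have := (maxDistant_iff_dist hG).1 hu'max w hw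
    have := (hG v' v).dist_triangle_left w
    omega
  have hne : u' ≠ v' := by
    rintro rfl
    have := (hG u v).pos_dist_of_ne huv
    rw [dist_self] at hv'
    omega
  rcases hC u' v' hne ⟨hmax, hv'max⟩ with h | h
  · exact ⟨u', h, (stronglyResolves_iff_dist hG).2 (Or.inr (by omega))⟩
  · have := (hG u' u).dist_triangle_left v'
    have := (hG u v).dist_triangle_left v'
    exact ⟨v', h, (stronglyResolves_iff_dist hG).2 (Or.inl (by omega))⟩

theorem stronglyResolves_of_adj_of_not_adj (huv : G.Adj u v) (huw : G.Adj u w)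
    (hvw : ¬ G.Adj v w) (hne : v ≠ w) : StronglyResolves G w u v := by
  have hwv : G.edist w v = 2 :=
    edist_eq_two_iff.2
      ⟨hne.symm, fun h => hvw h.symm, u, G.mem_commonNeighbors.2 ⟨huw.symm, huv.symm⟩⟩
  right
  rw [hwv, edist_eq_one_iff_adj.2 huw.symm, edist_eq_one_iff_adj.2 huv, one_add_one_eq_two]

theorem MMD.not_adj (hG : G.Preconnected) (htw : ∀ u v, TrueTwins G u v → u = v)
    (h : MMD G u v) : ¬ G.Adj u v := by
  intro huv
  wlog hw : ∃ w, G.Adj u w ∧ ¬ G.Adj v w ∧ v ≠ w generalizing u v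
  · refine this ⟨h.2, h.1⟩ huv.symm ?_
    obtain ⟨w, hw'⟩ := not_forall.1 (mt (htw u v) huv.ne)
    have := huv.symm
    grind
  obtain ⟨w, huw, hvw, hne⟩ := hw
  exact h.not_stronglyResolves hG huw.ne' hne.symm
    (stronglyResolves_of_adj_of_not_adj huv huw hvw hne)

end MutuallyMaximallyDistant

section LexProd

variable (G : SimpleGraph α) (H : SimpleGraph β)

def fiberHom (g : α) : H →g lexProd G H :=
  ⟨fun h => (g, h), fun hh => Or.inr ⟨rfl, hh⟩⟩

def layerHom (h : β) : G →g lexProd G H :=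
  ⟨fun g => (g, h), Or.inl⟩

variable {G H} {g g' x : α} {h h' y : β}

theorem edist_map_le {G' : SimpleGraph β} (f : G →g G') (u v : α) :
    G'.edist (f u) (f v) ≤ G.edist u v :=
  le_iInf fun p => (edist_le (p.map f)).trans_eq (by rw [Walk.length_map])

theorem lexProd_preconnected (hG : G.Preconnected) (hH : H.Preconnected) :
    (lexProd G H).Preconnected := by
  rintro ⟨g, h⟩ ⟨g', h'⟩
  exact ((hH h h').map (fiberHom G H g)).trans ((hG g g').map (layerHom G H h'))

theorem edist_fst_le_length {p q : α × β} (w : (lexProd G H).Walk p q) :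
    G.edist p.1 q.1 ≤ w.length := by
  induction w with
  | nil => simp
  | cons hadj w ih =>
    have hstep := edist_le_one_iff_adj_or_eq.2 (hadj.imp id And.left)
    calc _ ≤ _ := G.edist_triangle
      _ ≤ 1 + w.length := add_le_add hstep ih
      _ = _ := by rw [Walk.length_cons, Nat.cast_succ, add_comm]

theorem lexProd_edist_of_fst_ne (hg : g ≠ g') (h h' : β) :
    (lexProd G H).edist (g, h) (g', h') = G.edist g g' := by
  refine le_antisymm ?_ (le_iInf fun w => edist_fst_le_length w)
  rcases eq_or_ne (G.edist g g') ⊤ with htop | htop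
  · exact htop ▸ le_top
  obtain ⟨p, hp⟩ := exists_walk_of_edist_ne_top htop
  cases p with
  | nil => exact absurd rfl hg
  | @cons _ x _ hadj q =>
    have hadj' : (lexProd G H).Adj (g, h) (x, h') := Or.inl hadj
    calc _ ≤ _ := edist_le (.cons hadj' (q.map (layerHom G H h')))
      _ = ((q.map (layerHom G H h')).length + 1 : ℕ) := rfl
      _ = G.edist g g' := by simp [← hp]

theorem lexProd_edist_of_fst_eq (g : α) (hh : H.edist h h' ≤ 2) :
    (lexProd G H).edist (g, h) (g, h') = H.edist h h' := by
  refine le_antisymm (edist_map_le (fiberHom G H g) h h') (not_lt.1 fun hlt => ?_)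
  have hle : (lexProd G H).edist (g, h) (g, h') ≤ 1 := ENat.lt_two_iff.1 (hlt.trans_le hh)
  rcases edist_le_one_iff_adj_or_eq.1 hle with (hadj | ⟨-, hadj⟩) | heq
  · exact G.loopless.irrefl g hadj
  · rw [edist_eq_one_iff_adj.2 hadj, edist_eq_one_iff_adj.2 (Or.inr ⟨rfl, hadj⟩)] at hlt
    exact hlt.false
  · cases heq
    simp at hlt

theorem lexProd_dist_of_fst_ne (hg : g ≠ g') (h h' : β) :
    (lexProd G H).dist (g, h) (g', h') = G.dist g g' :=
  congrArg ENat.toNat (lexProd_edist_of_fst_ne hg h h')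

theorem lexProd_dist_of_fst_eq (g : α) (hh : H.edist h h' ≤ 2) :
    (lexProd G H).dist (g, h) (g, h') = H.dist h h' :=
  congrArg ENat.toNat (lexProd_edist_of_fst_eq g hh)

theorem stronglyResolves_lexProd_mk_iff (hH : H.ediam ≤ 2) :
    StronglyResolves (lexProd G H) (g, y) (g, h) (g, h') ↔ StronglyResolves H y h h' := by
  simp only [StronglyResolves, lexProd_edist_of_fst_eq g (edist_le_ediam.trans hH)]

theorem stronglyResolves_lexProd_iff_of_ne (hxg : x ≠ g) (hxg' : x ≠ g') (hgg' : g ≠ g') :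
    StronglyResolves (lexProd G H) (x, y) (g, h) (g', h') ↔ StronglyResolves G x g g' := by
  rw [StronglyResolves, StronglyResolves, lexProd_edist_of_fst_ne hxg,
    lexProd_edist_of_fst_ne hxg', lexProd_edist_of_fst_ne hgg', lexProd_edist_of_fst_ne hgg'.symm]

theorem not_stronglyResolves_lexProd_of_fst_ne (hG : G.Preconnected) (hH : H.ediam ≤ 2)
    (hxg : x ≠ g) (hh : h ≠ h') : ¬ StronglyResolves (lexProd G H) (x, y) (g, h) (g, h') := by
  have hH' := preconnected_of_ediam_ne_top (hH.trans_lt (by decide)).ne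
  have := (hH' h h').pos_dist_of_ne hh
  have := H.dist_comm (u := h) (v := h')
  rw [stronglyResolves_iff_dist (lexProd_preconnected hG hH'), lexProd_dist_of_fst_ne hxg,
    lexProd_dist_of_fst_ne hxg, lexProd_dist_of_fst_eq g (edist_le_ediam.trans hH),
    lexProd_dist_of_fst_eq g (edist_le_ediam.trans hH)]
  omega

theorem adj_or_eq_of_stronglyResolves_lexProd (hG : G.Preconnected) (hH : H.ediam ≤ 2)
    (hgg' : g ≠ g') (hres : StronglyResolves (lexProd G H) (g, y) (g, h) (g', h')) :
    G.Adj g g' ∨ y = h := by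
  have hH' := preconnected_of_ediam_ne_top (hH.trans_lt (by decide)).ne
  have hyh : H.dist y h ≤ 2 := ENat.toNat_le_of_le_natCast (edist_le_ediam.trans hH)
  have := (hG g g').pos_dist_of_ne hgg'
  have := G.dist_comm (u := g) (v := g')
  simp only [stronglyResolves_iff_dist (lexProd_preconnected hG hH'),
    lexProd_dist_of_fst_eq g (edist_le_ediam.trans hH), lexProd_dist_of_fst_ne hgg',
    lexProd_dist_of_fst_ne hgg'.symm] at hres
  rw [← dist_eq_one_iff_adj, ← (hH' y h).dist_eq_zero_iff]
  omega

end LexProd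

section Counting

variable [Fintype β] [DecidableEq α] [DecidableEq β]

def fiber (T : Finset (α × β)) (g : α) : Finset β :=
  univ.filter fun y => (g, y) ∈ T

theorem mem_fiber {T : Finset (α × β)} {g : α} {y : β} : y ∈ fiber T g ↔ (g, y) ∈ T := by
  simp [fiber]

variable [Fintype α]

theorem card_eq_sum_card_fiber (T : Finset (α × β)) : #T = ∑ g, #(fiber T g) :=
  calc #T = #(univ.filter (· ∈ T)) := by rw [filter_mem_eq_inter, univ_inter]
    _ = ∑ g, ∑ y, if (g, y) ∈ T then 1 else 0 := by rw [card_filter, Fintype.sum_prod_type]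
    _ = ∑ g, #(fiber T g) := by simp only [fiber, card_filter]

theorem sum_ite_mem_univ (F : Finset α) (a b : ℕ) :
    ∑ g, (if g ∈ F then a else b) = #F * a + (Fintype.card α - #F) * b := by
  rw [sum_ite, sum_const, sum_const, smul_eq_mul, smul_eq_mul, filter_mem_eq_inter, univ_inter,
    filter_not, filter_mem_eq_inter, univ_inter, card_univ_sdiff]

theorem mul_add_tsub_mul_le_of_le {n n' b k k' : ℕ} (hk : k ≤ k') (hk' : k' ≤ n)
    (hb : b ≤ n') :
    k * n' + (n - k) * b ≤ k' * n' + (n - k') * b := by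
  obtain ⟨d, rfl⟩ := Nat.exists_eq_add_of_le hk
  obtain ⟨e, rfl⟩ := Nat.exists_eq_add_of_le hk'
  rw [show k + d + e - k = d + e by omega, show k + d + e - (k + d) = e by omega]
  nlinarith

theorem mul_add_tsub_mul_eq {n n' a b : ℕ} (ha : a ≤ n) :
    a * n' + (n - a) * b = n * b + n' * a - a * b := by
  obtain ⟨c, rfl⟩ := Nat.exists_eq_add_of_le ha
  rw [Nat.add_sub_cancel_left]
  refine (Nat.sub_eq_of_eq_add ?_).symm
  ring

end Counting

section Bounds

variable {G : SimpleGraph α} {H : SimpleGraph β}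

theorem isStrongGenerator_lexProd [Fintype α] [Fintype β] [DecidableEq α] [DecidableEq β]
    (hH : H.ediam ≤ 2) {C : Finset α} {S : Finset β} (hC : IsStrongGenerator G C)
    (hS : IsStrongGenerator H S) :
    IsStrongGenerator (lexProd G H) (univ.filter fun p => p.1 ∈ C ∨ p.2 ∈ S) := by
  rintro ⟨g, h⟩ ⟨g', h'⟩ hne
  rcases eq_or_ne g g' with rfl | hgg'
  · obtain ⟨y, hy, hres⟩ := hS h h' (by simpa using hne)
    exact ⟨(g, y), by simp [hy], (stronglyResolves_lexProd_mk_iff hH).2 hres⟩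
  obtain ⟨x, hx, hres⟩ := hC g g' hgg'
  rcases eq_or_ne x g with rfl | hxg
  · exact ⟨(x, h), by simp [hx], stronglyResolves_left⟩
  rcases eq_or_ne x g' with rfl | hxg'
  · exact ⟨(x, h'), by simp [hx], stronglyResolves_right⟩
  exact ⟨(x, h), by simp [hx], (stronglyResolves_lexProd_iff_of_ne hxg hxg' hgg').2 hres⟩

theorem sdim_lexProd_le [Fintype α] [Fintype β] (hH : H.ediam ≤ 2) :
    sdim (lexProd G H) ≤ sdim G * Fintype.card β + (Fintype.card α - sdim G) * sdim H := by
  classical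
  obtain ⟨C, hC, hCcard⟩ := exists_isStrongGenerator_card_eq_sdim G
  obtain ⟨S, hS, hScard⟩ := exists_isStrongGenerator_card_eq_sdim H
  have hfiber (g : α) : fiber (univ.filter fun p => p.1 ∈ C ∨ p.2 ∈ S) g =
      if g ∈ C then univ else S := by
    ext y; split_ifs with hg <;> simp [mem_fiber, hg]
  calc sdim (lexProd G H) ≤ #(univ.filter fun p => p.1 ∈ C ∨ p.2 ∈ S) :=
        sdim_le_card (isStrongGenerator_lexProd hH hC hS)
    _ = ∑ g, if g ∈ C then Fintype.card β else #S := by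
        rw [card_eq_sum_card_fiber]
        exact sum_congr rfl fun g _ => by rw [hfiber]; split_ifs <;> rfl
    _ = _ := by rw [sum_ite_mem_univ, hCcard, hScard]

theorem isStrongGenerator_fiber [Fintype β] [DecidableEq α] [DecidableEq β]
    (hG : G.Preconnected) (hH : H.ediam ≤ 2) {T : Finset (α × β)}
    (hT : IsStrongGenerator (lexProd G H) T) (g : α) :
    IsStrongGenerator H (fiber T g) := by
  intro h h' hne
  obtain ⟨⟨x, y⟩, hxy, hres⟩ := hT (g, h) (g, h') (by simpa using hne)
  obtain rfl : x = g :=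
    by_contra fun hx => not_stronglyResolves_lexProd_of_fst_ne hG hH hx hne hres
  exact ⟨y, mem_fiber.2 hxy, (stronglyResolves_lexProd_mk_iff hH).1 hres⟩

theorem fiber_eq_univ_or_of_mmd [Fintype β] [DecidableEq α] [DecidableEq β]
    (hG : G.Preconnected) (hH : H.ediam ≤ 2) (htw : ∀ u v, TrueTwins G u v → u = v)
    {T : Finset (α × β)}
    (hT : IsStrongGenerator (lexProd G H) T) {g g' : α} (hgg' : g ≠ g') (hmmd : MMD G g g') :
    fiber T g = univ ∨ fiber T g' = univ := by
  by_contra! hfull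
  obtain ⟨h, hh⟩ := not_forall.1 fun h => hfull.1 (eq_univ_of_forall h)
  obtain ⟨h', hh'⟩ := not_forall.1 fun h => hfull.2 (eq_univ_of_forall h)
  rw [mem_fiber] at hh hh'
  obtain ⟨⟨x, y⟩, hxy, hres⟩ := hT (g, h) (g', h') (by simp [hgg'])
  rcases eq_or_ne x g with rfl | hxg
  · rcases adj_or_eq_of_stronglyResolves_lexProd hG hH hgg' hres with hadj | rfl
    · exact hmmd.not_adj hG htw hadj
    · exact hh hxy
  rcases eq_or_ne x g' with rfl | hxg'
  · rcases adj_or_eq_of_stronglyResolves_lexProd hG hH hgg'.symm hres.symm with hadj | rfl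
    · exact hmmd.not_adj hG htw hadj.symm
    · exact hh' hxy
  exact hmmd.not_stronglyResolves hG hxg hxg'
    ((stronglyResolves_lexProd_iff_of_ne hxg hxg' hgg').1 hres)

theorem le_card_of_isStrongGenerator_lexProd [Fintype α] [Fintype β] (hG : G.Preconnected)
    (hH : H.ediam ≤ 2) (htw : ∀ u v, TrueTwins G u v → u = v) {T : Finset (α × β)}
    (hT : IsStrongGenerator (lexProd G H) T) :
    sdim G * Fintype.card β + (Fintype.card α - sdim G) * sdim H ≤ #T := by
  classical
  set F := univ.filter fun g => fiber T g = univ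
  have hF : sdim G ≤ #F := sdim_le_card <| isStrongGenerator_of_forall_mmd hG
    fun g g' hgg' hmmd => by simpa [F] using fiber_eq_univ_or_of_mmd hG hH htw hT hgg' hmmd
  calc _ ≤ #F * Fintype.card β + (Fintype.card α - #F) * sdim H :=
        mul_add_tsub_mul_le_of_le hF (card_le_univ F) (sdim_le_fintype_card H)
    _ = ∑ g, if g ∈ F then Fintype.card β else sdim H := (sum_ite_mem_univ F _ _).symm
    _ ≤ ∑ g, #(fiber T g) := sum_le_sum fun g _ => by
        split_ifs with hg
        · rw [(mem_filter.1 hg).2, card_univ]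
        · exact sdim_le_card (isStrongGenerator_fiber hG hH hT g)
    _ = #T := (card_eq_sum_card_fiber T).symm

end Bounds

theorem stmt_15_general [Fintype α] [Fintype β] (G : SimpleGraph α) (H : SimpleGraph β)
    (hG : G.Connected)
    (htw : ∀ u v : α, TrueTwins G u v → u = v)
    (hdiam : H.ediam ≤ 2) :
    sdim (lexProd G H) =
      Fintype.card α * sdim H + Fintype.card β * sdim G - sdim G * sdim H := by
  obtain ⟨T, hT, hTcard⟩ := exists_isStrongGenerator_card_eq_sdim (lexProd G H)
  rw [← mul_add_tsub_mul_eq (sdim_le_fintype_card G)]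
  refine le_antisymm (sdim_lexProd_le hdiam) ?_
  exact hTcard ▸ le_card_of_isStrongGenerator_lexProd hG.preconnected hdiam htw hT

theorem stmt_15 [Fintype α] [Fintype β] (G : SimpleGraph α) (H : SimpleGraph β)
    (hG : G.Connected) (hn : 2 ≤ Fintype.card α)
    (htw : ∀ u v : α, TrueTwins G u v → u = v)
    (hn' : 2 ≤ Fintype.card β) (hdiam : H.ediam ≤ 2) :
    sdim (lexProd G H) =
      Fintype.card α * sdim H + Fintype.card β * sdim G - sdim G * sdim H :=
  stmt_15_general G H hG htw hdiam

end Paper
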